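/- arXiv:2209.04736 — 2 statements merged into one kernel-verified Lean document; each statement's English description precedes it below -/
import Mathlib

section
/- Let p be an odd prime, let Ω be a finite set with |Ω| = n > 1, and let G be a non-trivial subgroup of the symmetric group Sym(Ω) such that G = O^{p'}(G). Then there exists a partition Ω = Δ₁ ⊔ Δ₂ ⊔ Δ₃ into pairwise disjoint subsets with Δ₁ and Δ₂ non-empty (Δ₃ possibly empty) such that the index in G of the intersection Stab_G(Δ₁) ∩ Stab_G(Δ₂) ∩ Stab_G(Δ₃) of the three setwise stabilizers is divisible by p. -/
/-!
Since `G = O^{p'}(G) ≠ 1`, `p` divides `|G|`; pick `g ∈ G` of order `p`, let `Δ` be its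
support, `y ∈ Δ`, and `L = Stab_G(Δ) ∋ g`. The stabilizer of `({y}, Δ ∖ {y}, Δᶜ)` lies in
the point stabilizer `L_y`, so if its index were prime to `p`, so would be `|L : L_y|`. Then
the `p`-group `⟨g⟩` fixes a coset `c L_y` with `c ∈ L`, i.e. `g` fixes `c • y ∈ Δ`: absurd.
-/

open Pointwise MulAction

theorem IsPGroup.exists_conj_mem_of_not_dvd_index {G : Type*} [Group G] {p : ℕ} [Fact p.Prime]
    {P H : Subgroup G} (hP : IsPGroup p P) (hH : ¬ p ∣ H.index) :
    ∃ c : G, ∀ x ∈ P, c⁻¹ * x * c ∈ H := by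
  rw [Subgroup.index_eq_card] at hH
  obtain ⟨q, hq⟩ := hP.nonempty_fixed_point_of_prime_not_dvd_card (G ⧸ H) hH
  obtain ⟨c, rfl⟩ := QuotientGroup.mk_surjective q
  refine ⟨c, fun x hx => ?_⟩
  have hfix : ((x * c : G) : G ⧸ H) = c := hq ⟨x, hx⟩
  simpa [mul_assoc] using QuotientGroup.eq.mp hfix.symm

theorem IsPGroup.exists_conj_mem_of_not_dvd_relIndex {G : Type*} [Group G] {p : ℕ}
    [Fact p.Prime] {P H L : Subgroup G} (hP : IsPGroup p P) (hPL : P ≤ L)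
    (hH : ¬ p ∣ H.relIndex L) : ∃ c ∈ L, ∀ x ∈ P, c⁻¹ * x * c ∈ H := by
  obtain ⟨c, hc⟩ := hP.comap_subtype.exists_conj_mem_of_not_dvd_index hH
  exact ⟨c, c.2, fun x hx => Subgroup.mem_subgroupOf.mp (hc ⟨x, hPL hx⟩ hx)⟩

theorem prime_dvd_card_of_forall_normal_coprime_index_eq_top {G : Type*} [Group G]
    [Nontrivial G] {p : ℕ} (hp : p.Prime)
    (hG : ∀ N : Subgroup G, N.Normal → Nat.Coprime N.index p → N = ⊤) :
    p ∣ Nat.card G := by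
  by_contra hpG
  refine bot_ne_top (hG ⊥ inferInstance ?_)
  rw [Subgroup.index_bot]
  exact (hp.coprime_iff_not_dvd.mpr hpG).symm

namespace MulAction

variable {G α : Type*} [Group G] [MulAction G α]

theorem mem_stabilizer_setOf_smul_ne (g : G) : g ∈ stabilizer G {x : α | g • x ≠ x} :=
  mem_stabilizer_set.mpr fun x => by simp

theorem stabilizer_singleton_inf_stabilizer_sdiff_le {s : Set α} {y : α} (hy : y ∈ s) :
    stabilizer G ({y} : Set α) ⊓ stabilizer G (s \ {y}) ≤
      stabilizer G y ⊓ stabilizer G s := by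
  refine le_inf (stabilizer_singleton (G := G) y ▸ inf_le_left) ?_
  simpa [Set.union_sdiff_cancel (Set.singleton_subset_iff.mpr hy)] using
    stabilizer_inf_stabilizer_le_stabilizer_union (G := G) (s := {y}) (t := s \ {y})

theorem prime_dvd_index_stabilizer_inf_stabilizer_setOf_smul_ne {p : ℕ} [Fact p.Prime] {g : G}
    (hg : IsPGroup p (Subgroup.zpowers g)) {y : α} (hy : g • y ≠ y) :
    p ∣ (stabilizer G y ⊓ stabilizer G {x : α | g • x ≠ x}).index := by
  by_contra hpH
  obtain ⟨c, hcΔ, hc⟩ := hg.exists_conj_mem_of_not_dvd_relIndex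
    (Subgroup.zpowers_le.mpr (mem_stabilizer_setOf_smul_ne g))
    (fun h => hpH (h.trans (Subgroup.relIndex_dvd_index_of_le inf_le_right)))
  have hcy : g • c • y ≠ c • y := (mem_stabilizer_set.mp hcΔ y).mpr hy
  have hfix : (c⁻¹ * g * c) • y = y := (hc g (Subgroup.mem_zpowers g)).1
  rw [mul_smul, mul_smul, inv_smul_eq_iff] at hfix
  exact hcy hfix

end MulAction

theorem stmt_0_general {Ω : Type*} [Fintype Ω] (p : ℕ) (hp : p.Prime)
    (G : Subgroup (Equiv.Perm Ω)) (hG : G ≠ ⊥)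
    (hOp : ∀ N : Subgroup G, N.Normal → Nat.Coprime N.index p → N = ⊤) :
    ∃ Δ₁ Δ₂ Δ₃ : Set Ω,
      Δ₁.Nonempty ∧ Δ₂.Nonempty ∧
      Disjoint Δ₁ Δ₂ ∧ Disjoint Δ₁ Δ₃ ∧ Disjoint Δ₂ Δ₃ ∧
      Δ₁ ∪ Δ₂ ∪ Δ₃ = (Set.univ : Set Ω) ∧
      p ∣ (MulAction.stabilizer G Δ₁ ⊓ MulAction.stabilizer G Δ₂ ⊓
            MulAction.stabilizer G Δ₃).index := by
  have := Fact.mk hp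
  have := (Subgroup.nontrivial_iff_ne_bot G).mpr hG
  obtain ⟨g, hg⟩ := exists_prime_orderOf_dvd_card' p
    (prime_dvd_card_of_forall_normal_coprime_index_eq_top hp hOp)
  obtain ⟨y, hy⟩ : ∃ y : Ω, g • y ≠ y := by
    by_contra! h
    exact hp.ne_one
      (hg ▸ orderOf_eq_one_iff.mpr (eq_of_smul_eq_smul (α := Ω) (by simpa using h)))
  set Δ := {x : Ω | g • x ≠ x}
  have hyΔ : {y} ⊆ Δ := Set.singleton_subset_iff.mpr hy
  refine ⟨{y}, Δ \ {y}, Δᶜ, Set.singleton_nonempty y, ⟨g • y, ?_, hy⟩,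
    Set.disjoint_sdiff_right, Set.disjoint_compl_right_iff_subset.mpr hyΔ,
    Set.disjoint_compl_right_iff_subset.mpr Set.sdiff_subset,
    by rw [Set.union_sdiff_cancel hyΔ, Set.union_compl_self], ?_⟩
  · exact (mem_stabilizer_set.mp (mem_stabilizer_setOf_smul_ne g) y).mpr hy
  · exact (prime_dvd_index_stabilizer_inf_stabilizer_setOf_smul_ne
      (IsPGroup.of_card (by rw [Nat.card_zpowers, hg, pow_one])) hy).trans
      (Subgroup.index_dvd_of_le
        (inf_le_left.trans (stabilizer_singleton_inf_stabilizer_sdiff_le hy)))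

/-- Theorem 2.1 (first part): if `p` is an odd prime, `Ω` a finite set with more than one
element, and `G` a non-trivial subgroup of `Sym(Ω)` with `G = O^{p'}(G)`, then there is a
partition `Ω = Δ₁ ⊔ Δ₂ ⊔ Δ₃` with `Δ₁, Δ₂` non-empty such that `p` divides the index in `G`
of the intersection of the three setwise stabilizers. -/
theorem stmt_0 {Ω : Type*} [Fintype Ω] (p : ℕ) (hp : p.Prime) (hodd : Odd p)
    (hΩ : 1 < Fintype.card Ω)
    (G : Subgroup (Equiv.Perm Ω)) (hG : G ≠ ⊥)
    (hOp : ∀ N : Subgroup G, N.Normal → Nat.Coprime N.index p → N = ⊤) :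
    ∃ Δ₁ Δ₂ Δ₃ : Set Ω,
      Δ₁.Nonempty ∧ Δ₂.Nonempty ∧
      Disjoint Δ₁ Δ₂ ∧ Disjoint Δ₁ Δ₃ ∧ Disjoint Δ₂ Δ₃ ∧
      Δ₁ ∪ Δ₂ ∪ Δ₃ = (Set.univ : Set Ω) ∧
      p ∣ (MulAction.stabilizer G Δ₁ ⊓ MulAction.stabilizer G Δ₂ ⊓
            MulAction.stabilizer G Δ₃).index :=
  stmt_0_general p hp G hG hOp
end

section
/- Let p be a prime, let H be a finite group, and let S be a normal subgroup of H such that H/S is a p-group and the order of the center Z(S) of S is coprime to p. Let C = C_H(S) denote the centralizer of S in H (so that C ∩ S = Z(S)). Then there exists a subgroup Q of H such that: Q is contained in C, Q is a p-group, Q is normal in H, Q ∩ Z(S) = 1, and C = Z(S)·Q, i.e., every element of C can be written as a product z·q with z ∈ Z(S) and q ∈ Q. In particular C is the internal direct product of Z(S) and Q (these two subgroups commute elementwise, since Q ≤ C_H(S) centralizes Z(S) ≤ S). -/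
/-- Let `p` be a prime, `H` a finite group, `S ⊴ H` with `H/S` a `p`-group and `|Z(S)|`
coprime to `p`. Then, writing `C = C_H(S)` for the centralizer of `S` in `H` and viewing
`Z(S)` as a subgroup of `H`, there is a subgroup `Q ≤ C` which is a normal `p`-subgroup of
`H` with `Q ∩ Z(S) = 1` and `C = Z(S) · Q`: every element of `C` is a product `z * q` with
`z ∈ Z(S)` and `q ∈ Q`. -/
theorem stmt_4 (p : ℕ) (hp : p.Prime) (H : Type*) [Group H] [Finite H]
    (S : Subgroup H) [S.Normal]
    (hquot : IsPGroup p (H ⧸ S))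
    (hZ : Nat.Coprime (Nat.card (Subgroup.center S)) p) :
    ∃ Q : Subgroup H,
      Q ≤ Subgroup.centralizer (S : Set H) ∧
      IsPGroup p Q ∧
      Q.Normal ∧
      Q ⊓ (Subgroup.center S).map S.subtype = ⊥ ∧
      ∀ c ∈ Subgroup.centralizer (S : Set H),
        ∃ z ∈ (Subgroup.center S).map S.subtype, ∃ q ∈ Q, c = z * q := by
  haveI : Fact p.Prime := ⟨hp⟩
  set C := Subgroup.centralizer (S : Set H) with hCdef
  set Z := (Subgroup.center S).map S.subtype with hZdef
  -- basic facts
  have hZS : Z ≤ S := Subgroup.map_subtype_le _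
  have hcomm : ∀ c ∈ C, ∀ z ∈ Z, z * c = c * z := by
    intro c hc z hz
    exact (Subgroup.mem_centralizer_iff.mp hc) z (hZS hz)
  have hZC : Z ≤ C := by
    rintro z ⟨⟨z, hzS⟩, hz, rfl⟩
    intro s hs
    have := (Subgroup.mem_center_iff.mp hz) ⟨s, hs⟩
    exact congrArg Subtype.val this
  have hZcard : Nat.card Z = Nat.card (Subgroup.center S) :=
    (Nat.card_congr ((Subgroup.center S).equivMapOfInjective S.subtype
      S.subtype_injective).toEquiv).symm
  -- the map to the quotient
  let φ : C →* H ⧸ S := (QuotientGroup.mk' S).comp C.subtype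
  have hker : ∀ c : C, c ∈ φ.ker ↔ (c : H) ∈ Z := by
    intro c
    constructor
    · intro hc
      have hcS : (c : H) ∈ S := by
        simpa [φ, QuotientGroup.eq_one_iff] using hc
      refine Subgroup.mem_map.mpr ⟨⟨c, hcS⟩, ?_, rfl⟩
      rw [Subgroup.mem_center_iff]
      intro s
      exact Subtype.ext ((Subgroup.mem_centralizer_iff.mp c.2) s s.2)
    · intro hc
      simpa [φ, MonoidHom.mem_ker, QuotientGroup.eq_one_iff] using hZS hc
  -- quotient by kernel is a p-group
  have hquotC : IsPGroup p (C ⧸ φ.ker) :=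
    (hquot.to_subgroup φ.range).of_equiv (QuotientGroup.quotientKerEquivRange φ).symm
  obtain ⟨n, hn⟩ := IsPGroup.iff_card.mp hquotC
  have hindex : φ.ker.index = p ^ n := hn
  have hkercard : Nat.card φ.ker = Nat.card (Subgroup.center S) := by
    have he : φ.ker = Z.subgroupOf C := by
      ext c; rw [hker]; rfl
    rw [he, ← hZcard]
    exact Nat.card_congr (Subgroup.subgroupOfEquivOfLe hZC).toEquiv
  have hcop : Nat.Coprime (Nat.card φ.ker) φ.ker.index := by
    rw [hkercard, hindex]
    exact hZ.pow_right n
  obtain ⟨Q', hQ'⟩ := Subgroup.exists_right_complement'_of_coprime hcop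
  have hQle : Q'.map C.subtype ≤ C := Subgroup.map_subtype_le _
  have hdis : ∀ x : C, x ∈ φ.ker → x ∈ Q' → x = 1 := fun x h1 h2 =>
    Subgroup.mem_bot.mp (hQ'.disjoint.le_bot ⟨h1, h2⟩)
  have hdecomp : ∀ c : C, ∃ z q : C, z ∈ φ.ker ∧ q ∈ Q' ∧ z * q = c := by
    intro c
    obtain ⟨⟨z, q⟩, h⟩ := hQ'.2 c
    exact ⟨z, q, z.2, q.2, h⟩
  -- Q is a p-group
  have hQpg : IsPGroup p (Q'.map C.subtype) := by
    have h1 : Nat.card φ.ker * Nat.card Q' = Nat.card C := hQ'.card_mul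
    have h2 : Nat.card φ.ker * φ.ker.index = Nat.card C := Subgroup.card_mul_index _
    have hpos : Nat.card φ.ker ≠ 0 := Nat.card_pos.ne'
    have hcard : Nat.card Q' = p ^ n := by
      rw [← hindex]
      exact Nat.eq_of_mul_eq_mul_left (Nat.pos_of_ne_zero hpos) (h1.trans h2.symm)
    have : Nat.card (Q'.map C.subtype) = p ^ n := by
      rw [← hcard]
      exact (Nat.card_congr (Q'.equivMapOfInjective C.subtype C.subtype_injective).toEquiv).symm
    exact IsPGroup.of_card this
  -- characterization of membership in Q
  have hchar : ∀ x : H, x ∈ C → (∃ m, x ^ p ^ m = 1) → x ∈ Q'.map C.subtype := by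
    intro x hxC ⟨m, hm⟩
    obtain ⟨z, q, hz, hq, hzq⟩ := hdecomp ⟨x, hxC⟩
    have hzZ : (z : H) ∈ Z := (hker z).mp hz
    have hco : Commute z q := Subtype.ext (hcomm _ q.2 _ hzZ)
    have hxm : (⟨x, hxC⟩ : C) ^ p ^ m = 1 := by
      exact Subtype.ext (by simpa using hm)
    have hzm : z ^ p ^ m * q ^ p ^ m = 1 := by
      rw [← hco.mul_pow, hzq, hxm]
    have hz1 : z ^ p ^ m = (q ^ p ^ m)⁻¹ := eq_inv_of_mul_eq_one_left hzm
    have hzpm : z ^ p ^ m = 1 := by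
      refine hdis _ (φ.ker.pow_mem hz _) ?_
      rw [hz1]; exact Q'.inv_mem (Q'.pow_mem hq _)
    -- order of z divides both a p-power and a coprime number
    have hd1 : orderOf z ∣ p ^ m := orderOf_dvd_of_pow_eq_one hzpm
    have hd2 : orderOf z ∣ Nat.card (Subgroup.center S) := by
      rw [← hkercard, ← Subgroup.orderOf_mk z hz]
      exact orderOf_dvd_natCard _
    have hz1' : z = 1 := by
      rw [← orderOf_eq_one_iff]
      exact Nat.Coprime.eq_one_of_dvd ((hZ.pow_right m).coprime_dvd_left hd2) hd1
    rw [hz1', one_mul] at hzq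
    exact ⟨q, hq, by rw [hzq]; rfl⟩
  refine ⟨Q'.map C.subtype, hQle, hQpg, ?_, ?_, ?_⟩
  · -- normality
    refine ⟨fun x hx g => ?_⟩
    have hxC : x ∈ C := hQle hx
    obtain ⟨k, hk⟩ := hQpg ⟨x, hx⟩
    have hk' : x ^ p ^ k = 1 := by
      simpa using congrArg Subtype.val hk
    refine hchar _ ?_ ⟨k, ?_⟩
    · intro s hs
      have hs' : g⁻¹ * s * g ∈ S := by
        simpa using ‹S.Normal›.conj_mem s hs g⁻¹
      have hcx : (g⁻¹ * s * g) * x = x * (g⁻¹ * s * g) :=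
        Subgroup.mem_centralizer_iff.mp hxC _ hs'
      have e1 : s * (g * x * g⁻¹) = g * ((g⁻¹ * s * g) * x) * g⁻¹ := by group
      have e2 : g * (x * (g⁻¹ * s * g)) * g⁻¹ = (g * x * g⁻¹) * s := by group
      rw [e1, hcx, e2]
    · rw [conj_pow, hk', mul_one, mul_inv_cancel]
  · -- trivial intersection
    rw [eq_bot_iff]
    rintro x ⟨hxQ, hxZ⟩
    obtain ⟨q, hq, rfl⟩ := Subgroup.mem_map.mp hxQ
    have hqk : q ∈ φ.ker := (hker q).mpr hxZ
    rw [Subgroup.mem_bot]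
    rw [hdis q hqk hq]
    rfl
  · -- decomposition
    intro c hc
    obtain ⟨z, q, hz, hq, hzq⟩ := hdecomp ⟨c, hc⟩
    exact ⟨z, (hker z).mp hz, q, ⟨q, hq, rfl⟩, (congrArg Subtype.val hzq).symm⟩
end
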